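/- (Finite analogue of Ramanujan's Entry 3.) Let N be a positive integer and q ∈ ℂ with |q| < 1. Let a, b ∈ ℂ with 0 < |a| < 1, |b| < 1, and a·q^k ≠ 1 and b·q^k ≠ 1 for 0 ≤ k ≤ N−1. Then ∑_{n=1}^{N} [N choose n]_q · (q;q)_n (b/a;q)_n (a;q)_{N−n} a^n / ((b;q)_n (1 − q^n) (a;q)_N) = ∑_{m=1}^{∞} (a^m − b^m)(1 − q^{mN}) / (1 − q^m), where the infinite series converges absolutely. -/

import Mathlib

open Finset

/-- Finite q-Pochhammer symbol `(a;q)_n = ∏_{k=0}^{n-1} (1 - a q^k)`. -/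
noncomputable def qPoch (q a : ℂ) (n : ℕ) : ℂ :=
  ∏ k ∈ Finset.range n, (1 - a * q ^ k)

/-- Infinite q-Pochhammer symbol `(a;q)_∞ = ∏_{k=0}^{∞} (1 - a q^k)`. -/
noncomputable def qPochInf (q a : ℂ) : ℂ :=
  ∏' k : ℕ, (1 - a * q ^ k)

/-- Gaussian (q-binomial) coefficient `[N choose n]_q`. -/
noncomputable def qBinom (q : ℂ) (N n : ℕ) : ℂ :=
  qPoch q q N / (qPoch q q n * qPoch q q (N - n))

/-!
Writing `b = a c`, both sides equal `∑_{k<N} (a q^k / (1 - a q^k) - b q^k / (1 - b q^k))`.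
For the series, expand `(1 - q^{mN}) / (1 - q^m)` as a geometric sum over `k < N` and sum the
geometric series in `m` for each `k`. For the finite sum `S_N`, the difference
`S_{N+1} - S_N` telescopes in `n`, leaving the single term
`a q^N / (1 - a q^N) - b q^N / (1 - b q^N)`.
-/

section QPoch

variable {q a : ℂ} {m n : ℕ}

lemma qPoch_zero (q a : ℂ) : qPoch q a 0 = 1 := prod_range_zero _

lemma qPoch_succ (q a : ℂ) (n : ℕ) : qPoch q a (n + 1) = qPoch q a n * (1 - a * q ^ n) :=
  prod_range_succ _ _

lemma qPoch_ne_zero_iff : qPoch q a n ≠ 0 ↔ ∀ k < n, a * q ^ k ≠ 1 := by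
  simp only [qPoch, prod_ne_zero_iff, mem_range, sub_ne_zero, ne_comm (a := (1 : ℂ))]

lemma qPoch_ne_zero_of_le (h : m ≤ n) (hn : qPoch q a n ≠ 0) : qPoch q a m ≠ 0 :=
  qPoch_ne_zero_iff.2 fun k hk => qPoch_ne_zero_iff.1 hn k (hk.trans_le h)

lemma one_sub_mul_pow_ne_zero {k : ℕ} (hk : k < n) (hn : qPoch q a n ≠ 0) :
    1 - a * q ^ k ≠ 0 :=
  sub_ne_zero.2 (qPoch_ne_zero_iff.1 hn k hk).symm

end QPoch

/-- The summand of the finite sum, with `b / a` written as `c` (so `b = a * c`). -/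
noncomputable def entry3Term (q a c : ℂ) (N n : ℕ) : ℂ :=
  qBinom q N n * (qPoch q q n * qPoch q c n * qPoch q a (N - n) * a ^ n) /
    (qPoch q (a * c) n * (1 - q ^ n) * qPoch q a N)

/-- Obtained from the q-Gosper algorithm applied to
`n ↦ entry3Term q a c (N + 1) n - entry3Term q a c N n`. -/
noncomputable def entry3Certificate (q a c : ℂ) (N n : ℕ) : ℂ :=
  q ^ (N + 1 - n) * qPoch q q N * qPoch q c n * qPoch q a (N + 1 - n) * a ^ n /
    (qPoch q q (N + 1 - n) * qPoch q (a * c) (n - 1) * (1 - a * c * q ^ N) * qPoch q a (N + 1))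

section Telescoping

variable {q a c : ℂ} {N : ℕ}
  (hq : qPoch q q (N + 1) ≠ 0) (ha : qPoch q a (N + 1) ≠ 0) (hb : qPoch q (a * c) (N + 1) ≠ 0)
include hq ha hb

lemma entry3Term_succ_sub {n : ℕ} (h1 : 1 ≤ n) (hN : n ≤ N) :
    entry3Term q a c (N + 1) n - entry3Term q a c N n =
      entry3Certificate q a c N n - entry3Certificate q a c N (n + 1) := by
  obtain ⟨j, rfl⟩ : ∃ j, n = j + 1 := ⟨n - 1, by omega⟩
  obtain ⟨k, rfl⟩ : ∃ k, N = j + 1 + k := ⟨N - (j + 1), by omega⟩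
  have e1 : j + 1 + k + 1 - (j + 1) = k + 1 := by omega
  have e2 : j + 1 + k - (j + 1) = k := by omega
  have e3 : j + 1 + k + 1 - (j + 1 + 1) = k := by omega
  simp only [entry3Term, entry3Certificate, qBinom, e1, e2, e3, Nat.add_sub_cancel]
  have hq1 : qPoch q q (j + 1) ≠ 0 := qPoch_ne_zero_of_le (by omega) hq
  have hqk : qPoch q q (k + 1) ≠ 0 := qPoch_ne_zero_of_le (by omega) hq
  have hb1 : qPoch q (a * c) (j + 1) ≠ 0 := qPoch_ne_zero_of_le (by omega) hb
  have hqj : 1 - q ^ (j + 1) ≠ 0 := by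
    simpa only [← pow_succ'] using one_sub_mul_pow_ne_zero (lt_add_one j) hq1
  rw [qPoch_succ q a (j + 1 + k), qPoch_succ q q (j + 1 + k), qPoch_succ q q k, qPoch_succ q a k,
    qPoch_succ q (a * c) j, qPoch_succ q c (j + 1)]
  have hqk1 : 1 - q * q ^ k ≠ 0 := one_sub_mul_pow_ne_zero (lt_add_one k) hqk
  have hbj : 1 - a * c * q ^ j ≠ 0 := one_sub_mul_pow_ne_zero (lt_add_one j) hb1
  -- stated in the normal form that `field_simp` gives the denominators
  have haN : 1 - q ^ (j + 1 + k) * a ≠ 0 := by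
    rw [mul_comm]; exact one_sub_mul_pow_ne_zero (lt_add_one _) ha
  have hbN : 1 - q ^ (j + 1 + k) * a * c ≠ 0 := by
    convert one_sub_mul_pow_ne_zero (lt_add_one _) hb using 2; ring
  field_simp
  ring

lemma entry3Term_succ_self :
    entry3Term q a c (N + 1) (N + 1) = entry3Certificate q a c N (N + 1) := by
  have hqN : 1 - q ^ (N + 1) ≠ 0 := by
    simpa only [← pow_succ'] using one_sub_mul_pow_ne_zero (lt_add_one N) hq
  have hbN : 1 - a * c * q ^ N ≠ 0 := one_sub_mul_pow_ne_zero (lt_add_one N) hb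
  simp only [entry3Term, entry3Certificate, qBinom, Nat.sub_self, Nat.add_sub_cancel, qPoch_zero]
  rw [qPoch_succ q q N, qPoch_succ q (a * c) N, ← pow_succ']
  field_simp

lemma entry3Certificate_one :
    entry3Certificate q a c N 1 =
      a * q ^ N / (1 - a * q ^ N) - a * c * q ^ N / (1 - a * c * q ^ N) := by
  have hqN : qPoch q q N ≠ 0 := qPoch_ne_zero_of_le N.le_succ hq
  have haN : qPoch q a N ≠ 0 := qPoch_ne_zero_of_le N.le_succ ha
  have haN1 : 1 - a * q ^ N ≠ 0 := one_sub_mul_pow_ne_zero (lt_add_one N) ha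
  have hbN : 1 - a * c * q ^ N ≠ 0 := one_sub_mul_pow_ne_zero (lt_add_one N) hb
  simp only [entry3Certificate, Nat.add_sub_cancel, Nat.sub_self, qPoch_succ, qPoch_zero]
  rw [div_sub_div _ _ haN1 hbN, div_eq_div_iff (by simp [*]) (mul_ne_zero haN1 hbN)]
  ring

lemma sum_entry3Term_succ_sub :
    ∑ n ∈ Icc 1 (N + 1), entry3Term q a c (N + 1) n - ∑ n ∈ Icc 1 N, entry3Term q a c N n =
      a * q ^ N / (1 - a * q ^ N) - a * c * q ^ N / (1 - a * c * q ^ N) := by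
  set H := entry3Certificate q a c N
  have htel : ∑ n ∈ Icc 1 N, (H n - H (n + 1)) = H 1 - H (N + 1) := by
    rw [← neg_sub, ← Ico_add_one_right_eq_Icc, ← sum_Ico_sub H (by omega),
      ← sum_neg_distrib]
    simp only [neg_sub]
  calc ∑ n ∈ Icc 1 (N + 1), entry3Term q a c (N + 1) n - ∑ n ∈ Icc 1 N, entry3Term q a c N n
      = ∑ n ∈ Icc 1 N, (entry3Term q a c (N + 1) n - entry3Term q a c N n) +
          entry3Term q a c (N + 1) (N + 1) := by
        rw [sum_Icc_succ_top (by omega), sum_sub_distrib]; ring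
    _ = H 1 := by
        rw [sum_congr rfl fun n hn =>
            entry3Term_succ_sub hq ha hb (mem_Icc.1 hn).1 (mem_Icc.1 hn).2,
          htel, entry3Term_succ_self hq ha hb]
        ring
    _ = _ := entry3Certificate_one hq ha hb

end Telescoping

theorem sum_entry3Term {q a c : ℂ} {N : ℕ} (hq : qPoch q q N ≠ 0) (ha : qPoch q a N ≠ 0)
    (hb : qPoch q (a * c) N ≠ 0) :
    ∑ n ∈ Icc 1 N, entry3Term q a c N n =
      ∑ k ∈ range N, (a * q ^ k / (1 - a * q ^ k) - a * c * q ^ k / (1 - a * c * q ^ k)) := by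
  induction N with
  | zero => simp
  | succ N ih =>
    have lower {x : ℂ} (h : qPoch q x (N + 1) ≠ 0) : qPoch q x N ≠ 0 :=
      qPoch_ne_zero_of_le N.le_succ h
    rw [sum_range_succ, ← ih (lower hq) (lower ha) (lower hb),
      ← sum_entry3Term_succ_sub hq ha hb]
    ring

section Series

variable {K : Type*} [NormedField K]

lemma hasSum_pow_succ {x : K} (hx : ‖x‖ < 1) :
    HasSum (fun m : ℕ => x ^ (m + 1)) (x / (1 - x)) := by
  simpa only [pow_succ', div_eq_mul_inv] using (hasSum_geometric_of_norm_lt_one hx).mul_left x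

lemma pow_succ_ne_one_of_norm_lt_one {q : K} (hq : ‖q‖ < 1) (m : ℕ) : q ^ (m + 1) ≠ 1 := by
  intro h
  have : ‖q ^ (m + 1)‖ < 1 := by
    rw [norm_pow]; exact pow_lt_one₀ (norm_nonneg q) hq m.succ_ne_zero
  simp [h] at this

lemma pow_sub_pow_mul_geom_div {q : K} (a b : K) {m : ℕ} (hq : q ^ m ≠ 1) (N : ℕ) :
    (a ^ m - b ^ m) * (1 - q ^ (m * N)) / (1 - q ^ m) =
      ∑ k ∈ range N, ((a * q ^ k) ^ m - (b * q ^ k) ^ m) := by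
  have hterm (k : ℕ) : (a * q ^ k) ^ m - (b * q ^ k) ^ m = (a ^ m - b ^ m) * (q ^ m) ^ k := by
    rw [mul_pow, mul_pow, ← pow_mul, ← pow_mul, mul_comm k m]; ring
  rw [sum_congr rfl fun k _ => hterm k, ← mul_sum, geom_sum_eq hq, pow_mul, mul_div_assoc,
    ← neg_div_neg_eq, neg_sub, neg_sub]

theorem hasSum_entry3Series {q a b : K} (hq : ‖q‖ < 1) (ha : ‖a‖ < 1) (hb : ‖b‖ < 1)
    (N : ℕ) :
    HasSum
      (fun m : ℕ => (a ^ (m + 1) - b ^ (m + 1)) * (1 - q ^ ((m + 1) * N)) / (1 - q ^ (m + 1)))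
      (∑ k ∈ range N, (a * q ^ k / (1 - a * q ^ k) - b * q ^ k / (1 - b * q ^ k))) := by
  have hmul {x : K} (hx : ‖x‖ < 1) (k : ℕ) : ‖x * q ^ k‖ < 1 := by
    rw [norm_mul, norm_pow]
    exact lt_of_le_of_lt (mul_le_of_le_one_right (norm_nonneg x)
      (pow_le_one₀ (norm_nonneg q) hq.le)) hx
  refine (hasSum_sum fun k _ =>
    (hasSum_pow_succ (hmul ha k)).sub (hasSum_pow_succ (hmul hb k))).congr_fun fun m => ?_
  exact pow_sub_pow_mul_geom_div a b (pow_succ_ne_one_of_norm_lt_one hq m) N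

end Series

theorem stmt_5_general (N : ℕ) (q a b : ℂ) (hq : ‖q‖ < 1)
    (ha0 : 0 < ‖a‖) (ha1 : ‖a‖ < 1) (hb1 : ‖b‖ < 1)
    (haq : ∀ k < N, a * q ^ k ≠ 1) (hbq : ∀ k < N, b * q ^ k ≠ 1) :
    Summable (fun m : ℕ =>
        (a ^ (m + 1) - b ^ (m + 1)) * (1 - q ^ ((m + 1) * N)) / (1 - q ^ (m + 1))) ∧
    ∑ n ∈ Finset.Icc 1 N, qBinom q N n *
        (qPoch q q n * qPoch q (b / a) n * qPoch q a (N - n) * a ^ n) /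
        (qPoch q b n * (1 - q ^ n) * qPoch q a N)
      = ∑' m : ℕ,
          (a ^ (m + 1) - b ^ (m + 1)) * (1 - q ^ ((m + 1) * N)) / (1 - q ^ (m + 1)) := by
  have hab : a * (b / a) = b := mul_div_cancel₀ b (norm_pos_iff.1 ha0)
  have hqq : qPoch q q N ≠ 0 :=
    qPoch_ne_zero_iff.2 fun k _ => by rw [← pow_succ']; exact pow_succ_ne_one_of_norm_lt_one hq k
  have hqb : qPoch q (a * (b / a)) N ≠ 0 := by rw [hab]; exact qPoch_ne_zero_iff.2 hbq
  have hfinite := sum_entry3Term hqq (qPoch_ne_zero_iff.2 haq) hqb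
  simp only [entry3Term, hab] at hfinite
  have hseries := hasSum_entry3Series hq ha1 hb1 N
  exact ⟨hseries.summable, hfinite.trans hseries.tsum_eq.symm⟩

theorem stmt_5 (N : ℕ) (hN : 1 ≤ N) (q a b : ℂ) (hq : ‖q‖ < 1)
    (ha0 : 0 < ‖a‖) (ha1 : ‖a‖ < 1) (hb1 : ‖b‖ < 1)
    (haq : ∀ k < N, a * q ^ k ≠ 1) (hbq : ∀ k < N, b * q ^ k ≠ 1) :
    Summable (fun m : ℕ =>
        (a ^ (m + 1) - b ^ (m + 1)) * (1 - q ^ ((m + 1) * N)) / (1 - q ^ (m + 1))) ∧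
    ∑ n ∈ Finset.Icc 1 N, qBinom q N n *
        (qPoch q q n * qPoch q (b / a) n * qPoch q a (N - n) * a ^ n) /
        (qPoch q b n * (1 - q ^ n) * qPoch q a N)
      = ∑' m : ℕ,
          (a ^ (m + 1) - b ^ (m + 1)) * (1 - q ^ ((m + 1) * N)) / (1 - q ^ (m + 1)) :=
  stmt_5_general N q a b hq ha0 ha1 hb1 haq hbq
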